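/- arXiv:2012.08363 — 2 statements merged into one kernel-verified Lean document; each statement's English description precedes it below -/
import Mathlib

section
/- Let k ∈ V be a nonzero null vector (g(k,k) = 0) and let (n, m, m̄) be a Newman–Penrose tetrad adapted to k. Then the kernel of D[k], acting on complex symmetric bilinear forms on W, is the internal direct sum of the subspace G = {k ⊙ b : b ∈ W}, which has complex dimension 4, and the two-dimensional subspace spanned over ℂ by m⊙m and m̄⊙m̄. -/
open scoped TensorProduct
open Module

noncomputable section

variable {V : Type} [AddCommGroup V] [Module ℝ V]

/-- The complexification `W = ℂ ⊗ V` of the real vector space `V`. -/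
abbrev Cx (V : Type) [AddCommGroup V] [Module ℝ V] := ℂ ⊗[ℝ] V

/-- The canonical inclusion of `V` into its complexification `W = ℂ ⊗ V`. -/
def ι (v : V) : Cx V := (1 : ℂ) ⊗ₜ[ℝ] v

/-- Complex conjugation `u ↦ ū` on `W = ℂ ⊗ V` induced by the real structure. -/
def conjW : Cx V →ₗ[ℝ] Cx V :=
  TensorProduct.map Complex.conjAe.toLinearMap LinearMap.id

lemma conjW_smul (c : ℂ) (u : Cx V) :
    conjW (c • u) = (starRingEnd ℂ c) • conjW u := by
  induction u using TensorProduct.induction_on with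
  | zero => simp
  | tmul x v =>
      simp [conjW, TensorProduct.smul_tmul', smul_eq_mul, map_mul, TensorProduct.map_tmul]
  | add a b ha hb => simp [smul_add, map_add, ha, hb]

/-- The ℂ-bilinear extension of `g` to `W = ℂ ⊗ V`. -/
def gW (g : LinearMap.BilinForm ℝ V) : LinearMap.BilinForm ℂ (Cx V) :=
  g.baseChange ℂ

/-- The symmetric product `u ⊙ v`, as a complex bilinear form on `W`:
`(u ⊙ v)(a,b) = (1/2) (g(u,a) g(v,b) + g(v,a) g(u,b))`. -/
def sprod (g : LinearMap.BilinForm ℝ V) (u v : Cx V) : LinearMap.BilinForm ℂ (Cx V) :=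
  LinearMap.mk₂ ℂ
    (fun a b => (1 / 2 : ℂ) * (gW g u a * gW g v b + gW g v a * gW g u b))
    (by intro a a' b; simp only [map_add]; ring)
    (by intro c a b; simp only [map_smul, smul_eq_mul]; ring)
    (by intro a b b'; simp only [map_add]; ring)
    (by intro a c b; simp only [map_smul, smul_eq_mul]; ring)

/-- The symmetric product with a fixed vector, as a linear map `b ↦ u ⊙ b`. -/
def sprodL (g : LinearMap.BilinForm ℝ V) (u : Cx V) :
    Cx V →ₗ[ℂ] LinearMap.BilinForm ℂ (Cx V) where
  toFun v := sprod g u v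
  map_add' v v' := by
    refine LinearMap.ext fun a => LinearMap.ext fun b => ?_
    simp only [sprod, LinearMap.mk₂_apply, LinearMap.add_apply, map_add]
    ring
  map_smul' c v := by
    refine LinearMap.ext fun a => LinearMap.ext fun b => ?_
    simp only [sprod, LinearMap.mk₂_apply, LinearMap.smul_apply, map_smul, smul_eq_mul,
      RingHom.id_apply]
    ring

/-- The conjugate form `ā` of a complex bilinear form `a` on `W`:
`ā(u,v) = conj (a(ū, v̄))`. -/
def conjForm (a : LinearMap.BilinForm ℂ (Cx V)) : LinearMap.BilinForm ℂ (Cx V) :=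
  LinearMap.mk₂ ℂ (fun u v => starRingEnd ℂ (a (conjW u) (conjW v)))
    (by intro u u' v; simp only [map_add, LinearMap.add_apply])
    (by intro c u v; simp only [conjW_smul, map_smul, LinearMap.smul_apply, smul_eq_mul,
          map_mul, Complex.conj_conj])
    (by intro u v v'; simp only [map_add])
    (by intro u c v; simp only [conjW_smul, map_smul, LinearMap.smul_apply, smul_eq_mul,
          map_mul, Complex.conj_conj])

/-- A Newman–Penrose tetrad `(k, n, m, m̄)` adapted to a nonzero null `k ∈ V`:
all the orthogonality relations of the tetrad. -/
def IsNPTetrad (g : LinearMap.BilinForm ℝ V) (k n : V) (m : Cx V) : Prop :=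
  gW g m (conjW m) = 1 ∧ gW g (ι k) (ι n) = -1 ∧
    gW g (ι k) (ι k) = 0 ∧ gW g (ι n) (ι n) = 0 ∧
    gW g m m = 0 ∧ gW g (conjW m) (conjW m) = 0 ∧
    gW g (ι k) m = 0 ∧ gW g (ι k) (conjW m) = 0 ∧
    gW g (ι n) m = 0 ∧ gW g (ι n) (conjW m) = 0

variable [FiniteDimensional ℝ V]

/-- The `g`-associated endomorphism `Ŝ` of a bilinear form `S` on `W`, characterized by
`g(Ŝ a, b) = S(a, b)` (defined when the extension of `g` to `W` is nondegenerate, which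
holds whenever `g` is nondegenerate). -/
def hatEnd (g : LinearMap.BilinForm ℝ V) (S : LinearMap.BilinForm ℂ (Cx V)) :
    Cx V →ₗ[ℂ] Cx V :=
  letI := Classical.dec ((gW g).Nondegenerate)
  if hnd : (gW g).Nondegenerate then ((gW g).toDual hnd).symm.toLinearMap ∘ₗ S else 0

/-- The metric trace `tr_g S` of a bilinear form `S` on `W`. -/
def trg (g : LinearMap.BilinForm ℝ V) (S : LinearMap.BilinForm ℂ (Cx V)) : ℂ :=
  LinearMap.trace ℂ (Cx V) (hatEnd g S)

/-- The full metric contraction `⟨A, B⟩ = tr (Â ∘ B̂)` of bilinear forms on `W`. -/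
def contr (g : LinearMap.BilinForm ℝ V) (A B : LinearMap.BilinForm ℂ (Cx V)) : ℂ :=
  LinearMap.trace ℂ (Cx V) (hatEnd g A ∘ₗ hatEnd g B)

/-- The value `D[k](S)(u,v)` of the symbol operator `D[k]` on a bilinear form `S`. -/
def Dval (g : LinearMap.BilinForm ℝ V) (k : V) (S : LinearMap.BilinForm ℂ (Cx V))
    (u v : Cx V) : ℂ :=
  (1 / 2 : ℂ) *
    (gW g (ι k) (ι k) * S u v - gW g (ι k) (ι k) * gW g u v * trg g S
      + gW g (ι k) u * gW g (ι k) v * trg g S + gW g u v * S (ι k) (ι k)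
      - gW g (ι k) u * S (ι k) v - gW g (ι k) v * S (ι k) u)

/-- The symbol operator `D[k]`, acting on bilinear forms on `W`. -/
def Dop (g : LinearMap.BilinForm ℝ V) (k : V) (S : LinearMap.BilinForm ℂ (Cx V)) :
    LinearMap.BilinForm ℂ (Cx V) :=
  LinearMap.mk₂ ℂ (fun u v => Dval g k S u v)
    (by intro u u' v; simp only [Dval, map_add, LinearMap.add_apply]; ring)
    (by intro c u v; simp only [Dval, map_smul, LinearMap.smul_apply, smul_eq_mul]; ring)
    (by intro u v v'; simp only [Dval, map_add, LinearMap.add_apply]; ring)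
    (by intro u c v; simp only [Dval, map_smul, LinearMap.smul_apply, smul_eq_mul]; ring)

end

/-!
In the null tetrad `(k, n, m, m̄)` the `g`-dual basis is `(-n, -k, m̄, m)`, so
`tr_g S = -2 S(k,n) + 2 S(m,m̄)` for symmetric `S`. Since `g(k,k) = 0`, `D[k] S = 0` says exactly
that `S(k,·) = ½ tr_g S · g(k,·)`. Evaluating this at `k, m, m̄` and feeding `S(k,n) = -½ tr_g S`
into the trace formula gives `S(k,k) = S(k,m) = S(k,m̄) = S(m,m̄) = 0`, which is what it takes for
`S = k ⊙ b + S(m̄,m̄) m ⊙ m + S(m,m) m̄ ⊙ m̄`. Conversely `k ⊙ b` has trace `g(b,k)` and `k`-row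
`½ g(b,k) g(k,·)`, while `m ⊙ m` and `m̄ ⊙ m̄` have neither. Evaluation at `(m̄,m̄)` and `(m,m)`
separates `m ⊙ m`, `m̄ ⊙ m̄` and `G`, and `b ↦ k ⊙ b` is injective by nondegeneracy.
-/

section Biorthogonal

variable {K M ι : Type*} [Field K] [AddCommGroup M] [Module K M] [Fintype ι] [DecidableEq ι]
  {v : ι → M} {f : ι → M →ₗ[K] K}

lemma linearIndependent_of_biorthogonal (h : ∀ i j, f i (v j) = if i = j then 1 else 0) :
    LinearIndependent K v :=
  Fintype.linearIndependent_iff.2 fun c hc i => by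
    simpa [map_sum, h] using congrArg (f i) hc

variable [FiniteDimensional K M]

noncomputable def basisOfBiorthogonal (h : ∀ i j, f i (v j) = if i = j then 1 else 0)
    (hcard : Fintype.card ι = finrank K M) : Basis ι K M :=
  basisOfLinearIndependentOfCardEqFinrank' v (linearIndependent_of_biorthogonal h) hcard

@[simp]
lemma coe_basisOfBiorthogonal (h : ∀ i j, f i (v j) = if i = j then 1 else 0)
    (hcard : Fintype.card ι = finrank K M) : ⇑(basisOfBiorthogonal h hcard) = v :=
  coe_basisOfLinearIndependentOfCardEqFinrank' ..

lemma basisOfBiorthogonal_repr (h : ∀ i j, f i (v j) = if i = j then 1 else 0)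
    (hcard : Fintype.card ι = finrank K M) (x : M) (i : ι) :
    (basisOfBiorthogonal h hcard).repr x i = f i x := by
  rw [← Basis.coord_apply]
  congr 1
  refine (basisOfBiorthogonal h hcard).ext fun j => ?_
  have hj := (basisOfBiorthogonal h hcard).repr_self j
  rw [coe_basisOfBiorthogonal] at hj
  simp [hj, h, Finsupp.single_apply, eq_comm]

lemma eq_zero_of_biorthogonal (h : ∀ i j, f i (v j) = if i = j then 1 else 0)
    (hcard : Fintype.card ι = finrank K M) {x : M} (hx : ∀ i, f i x = 0) : x = 0 :=
  (basisOfBiorthogonal h hcard).ext_elem_iff.2 (by simp [basisOfBiorthogonal_repr, hx])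

lemma trace_eq_sum_biorthogonal (h : ∀ i j, f i (v j) = if i = j then 1 else 0)
    (hcard : Fintype.card ι = finrank K M) (T : M →ₗ[K] M) :
    LinearMap.trace K M T = ∑ i, f i (T (v i)) := by
  rw [LinearMap.trace_eq_matrix_trace K (basisOfBiorthogonal h hcard), Matrix.trace]
  simp [LinearMap.toMatrix_apply, basisOfBiorthogonal_repr]

end Biorthogonal

/-- `l, n, m, mb` play the roles of `k, n, m, m̄`; nothing ties `mb` to the conjugate of `m`. -/
structure IsNullTetrad {E : Type*} [AddCommGroup E] [Module ℂ E]
    (B : LinearMap.BilinForm ℂ E) (l n m mb : E) : Prop where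
  m_mb : B m mb = 1
  l_n : B l n = -1
  l_l : B l l = 0
  n_n : B n n = 0
  m_m : B m m = 0
  mb_mb : B mb mb = 0
  l_m : B l m = 0
  l_mb : B l mb = 0
  n_m : B n m = 0
  n_mb : B n mb = 0

namespace IsNullTetrad

variable {E : Type*} [AddCommGroup E] [Module ℂ E] {B : LinearMap.BilinForm ℂ E} {l n m mb : E}

lemma mb_m (ht : IsNullTetrad B l n m mb) (hB : B.IsSymm) : B mb m = 1 := (hB.eq mb m).trans ht.m_mb
lemma n_l (ht : IsNullTetrad B l n m mb) (hB : B.IsSymm) : B n l = -1 := (hB.eq n l).trans ht.l_n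
lemma m_l (ht : IsNullTetrad B l n m mb) (hB : B.IsSymm) : B m l = 0 := (hB.eq m l).trans ht.l_m
lemma mb_l (ht : IsNullTetrad B l n m mb) (hB : B.IsSymm) : B mb l = 0 := (hB.eq mb l).trans ht.l_mb
lemma m_n (ht : IsNullTetrad B l n m mb) (hB : B.IsSymm) : B m n = 0 := (hB.eq m n).trans ht.n_m
lemma mb_n (ht : IsNullTetrad B l n m mb) (hB : B.IsSymm) : B mb n = 0 := (hB.eq mb n).trans ht.n_mb

lemma biorthogonal (ht : IsNullTetrad B l n m mb) (hB : B.IsSymm) (i j : Fin 4) :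
    (![-B n, -B l, B mb, B m] : Fin 4 → E →ₗ[ℂ] ℂ) i (![l, n, m, mb] j) =
      if i = j then 1 else 0 := by
  fin_cases i <;> fin_cases j <;>
    simp [ht.m_mb, ht.l_n, ht.l_l, ht.n_n, ht.m_m, ht.mb_mb, ht.l_m, ht.l_mb, ht.n_m,
      ht.n_mb, ht.mb_m hB, ht.n_l hB, ht.m_l hB, ht.mb_l hB, ht.m_n hB, ht.mb_n hB]

variable [FiniteDimensional ℂ E]

noncomputable def basis (ht : IsNullTetrad B l n m mb) (hB : B.IsSymm) (h4 : finrank ℂ E = 4) :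
    Basis (Fin 4) ℂ E :=
  basisOfBiorthogonal (ht.biorthogonal hB) (by simp [h4])

@[simp]
lemma coe_basis (ht : IsNullTetrad B l n m mb) (hB : B.IsSymm) (h4 : finrank ℂ E = 4) :
    ⇑(ht.basis hB h4) = ![l, n, m, mb] :=
  coe_basisOfBiorthogonal ..

lemma nondegenerate (ht : IsNullTetrad B l n m mb) (hB : B.IsSymm) (h4 : finrank ℂ E = 4) :
    B.Nondegenerate :=
  hB.isRefl.nondegenerate_iff_separatingLeft.2 fun x hx =>
    eq_zero_of_biorthogonal (ht.biorthogonal hB) (by simp [h4]) fun i => by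
      fin_cases i <;> simp [← hB.eq x, hx]

lemma trace_eq (ht : IsNullTetrad B l n m mb) (hB : B.IsSymm) (h4 : finrank ℂ E = 4)
    (T : E →ₗ[ℂ] E) :
    LinearMap.trace ℂ E T = -B n (T l) - B l (T n) + B mb (T m) + B m (T mb) := by
  rw [trace_eq_sum_biorthogonal (ht.biorthogonal hB) (by simp [h4]), Fin.sum_univ_four]
  simp only [Matrix.cons_val_zero, Matrix.cons_val_one, Matrix.cons_val, LinearMap.neg_apply]
  ring

end IsNullTetrad

section

variable {V : Type} [AddCommGroup V] [Module ℝ V] {g : LinearMap.BilinForm ℝ V}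

lemma IsNPTetrad.isNullTetrad {k n : V} {m : Cx V} (h : IsNPTetrad g k n m) :
    IsNullTetrad (gW g) (ι k) (ι n) m (conjW m) :=
  let ⟨h₁, h₂, h₃, h₄, h₅, h₆, h₇, h₈, h₉, h₁₀⟩ := h
  ⟨h₁, h₂, h₃, h₄, h₅, h₆, h₇, h₈, h₉, h₁₀⟩

lemma gW_isSymm (hsymm : g.IsSymm) : (gW g).IsSymm :=
  LinearMap.BilinForm.isSymm_iff.2 <|
    LinearMap.BilinForm.IsSymm.baseChange ℂ (LinearMap.BilinForm.isSymm_iff.1 hsymm)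

lemma sprod_apply (u v a b : Cx V) :
    sprod g u v a b = (1 / 2 : ℂ) * (gW g u a * gW g v b + gW g v a * gW g u b) := rfl

lemma sprodL_apply (u b : Cx V) : sprodL g u b = sprod g u b := rfl

lemma isSymm_sprod_add (l b m mb : Cx V) (α β : ℂ) :
    (sprod g l b + (α • sprod g m m + β • sprod g mb mb)).IsSymm :=
  ⟨fun u v => by simp only [LinearMap.add_apply, LinearMap.smul_apply, sprod_apply]; ring⟩

variable {l n m mb : Cx V}

lemma sprod_add_sprod_apply (hB : (gW g).IsSymm) (ht : IsNullTetrad (gW g) l n m mb) (α β : ℂ) :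
    (α • sprod g m m + β • sprod g mb mb) mb mb = α ∧
      (α • sprod g m m + β • sprod g mb mb) m m = β := by
  simp only [LinearMap.add_apply, LinearMap.smul_apply, smul_eq_mul, sprod_apply, ht.m_mb,
    ht.mb_m hB, ht.m_m, ht.mb_mb]
  constructor <;> ring

lemma linearIndependent_sprod_pair (hB : (gW g).IsSymm) (ht : IsNullTetrad (gW g) l n m mb) :
    LinearIndependent ℂ ![sprod g m m, sprod g mb mb] := by
  refine LinearIndependent.pair_iff.2 fun α β h => ?_
  obtain ⟨hα, hβ⟩ := sprod_add_sprod_apply hB ht α β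
  rw [h] at hα hβ
  exact ⟨hα.symm, hβ.symm⟩

lemma range_sprodL_inf_span_eq_bot (hB : (gW g).IsSymm) (ht : IsNullTetrad (gW g) l n m mb) :
    LinearMap.range (sprodL g l) ⊓
      Submodule.span ℂ ({sprod g m m, sprod g mb mb} : Set (LinearMap.BilinForm ℂ (Cx V))) = ⊥ := by
  refine (Submodule.eq_bot_iff _).2 fun S hS => ?_
  obtain ⟨⟨b, rfl⟩, hspan⟩ := Submodule.mem_inf.1 hS
  obtain ⟨α, β, hαβ⟩ := Submodule.mem_span_pair.1 hspan
  obtain ⟨hα, hβ⟩ := sprod_add_sprod_apply hB ht α β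
  rw [hαβ] at hα hβ
  simp only [sprodL_apply, sprod_apply, ht.l_m, ht.l_mb, zero_mul, mul_zero, add_zero] at hα hβ
  rw [← hαβ, ← hα, ← hβ]
  simp

variable [FiniteDimensional ℝ V] {k : V}

lemma gW_hatEnd_apply (hnd : (gW g).Nondegenerate) (S : LinearMap.BilinForm ℂ (Cx V))
    (a c : Cx V) : gW g (hatEnd g S a) c = S a c := by
  rw [hatEnd, dif_pos hnd]
  exact LinearMap.BilinForm.apply_toDual_symm_apply (hB := hnd) (S a) c

lemma trg_eq (hB : (gW g).IsSymm) (ht : IsNullTetrad (gW g) l n m mb)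
    (h4 : finrank ℂ (Cx V) = 4) (S : LinearMap.BilinForm ℂ (Cx V)) :
    trg g S = -S l n - S n l + S m mb + S mb m := by
  rw [trg, ht.trace_eq hB h4, hB.eq n, hB.eq l, hB.eq mb, hB.eq m]
  simp only [gW_hatEnd_apply (ht.nondegenerate hB h4)]

lemma Dval_eq_zero_iff (ht : IsNullTetrad (gW g) (ι k) n m mb)
    (S : LinearMap.BilinForm ℂ (Cx V)) :
    (∀ u v, Dval g k S u v = 0) ↔ ∀ v, S (ι k) v = trg g S / 2 * gW g (ι k) v := by
  refine ⟨fun hD => ?_, fun hS u v => by simp only [Dval, hS, ht.l_l]; ring⟩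
  have hkk : S (ι k) (ι k) = 0 := by
    have h := hD m mb
    simp only [Dval, ht.l_l, ht.l_m, ht.l_mb, ht.m_mb] at h
    linear_combination 2 * h
  have hkv : ∀ v, S (ι k) v = gW g (ι k) v * (trg g S + S (ι k) n) := fun v => by
    have h := hD n v
    simp only [Dval, ht.l_l, ht.l_n, hkk] at h
    linear_combination 2 * h
  have hkn := hkv n
  rw [ht.l_n] at hkn
  intro v
  rw [hkv v]
  linear_combination gW g (ι k) v / 2 * hkn

/-- The vector `b` is fixed by its pairings with the tetrad:
`g(b,l) = -2 S(l,n)`, `g(b,n) = -S(n,n)`, `g(b,m) = -2 S(n,m)`, `g(b,mb) = -2 S(n,mb)`. -/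
lemma eq_sprod_add_sprod (hB : (gW g).IsSymm) (ht : IsNullTetrad (gW g) l n m mb)
    (h4 : finrank ℂ (Cx V) = 4) {S : LinearMap.BilinForm ℂ (Cx V)} (hS : S.IsSymm)
    (hll : S l l = 0) (hlm : S l m = 0) (hlmb : S l mb = 0) (hmmb : S m mb = 0) :
    S = sprod g l (S n n • l + (2 * S l n) • n - (2 * S n mb) • m - (2 * S n m) • mb)
      + (S mb mb • sprod g m m + S m m • sprod g mb mb) := by
  refine LinearMap.ext_basis (ht.basis hB h4) (ht.basis hB h4) fun i j => ?_
  have hml : S m l = 0 := (hS.eq m l).trans hlm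
  have hmbl : S mb l = 0 := (hS.eq mb l).trans hlmb
  have hmbm : S mb m = 0 := (hS.eq mb m).trans hmmb
  rw [ht.coe_basis hB h4]
  fin_cases i <;> fin_cases j <;>
    simp only [Fin.zero_eta, Fin.mk_one, Fin.reduceFinMk, Matrix.cons_val,
      Matrix.cons_val_zero, Matrix.cons_val_one, LinearMap.add_apply, LinearMap.smul_apply,
      smul_eq_mul, sprod_apply, map_add, map_sub, map_smul, LinearMap.sub_apply,
      hll, hlm, hlmb, hmmb, hml, hmbl, hmbm, hS.eq n l, hS.eq m n, hS.eq mb n, ht.m_mb, ht.l_n, ht.l_l, ht.n_n, ht.m_m, ht.mb_mb, ht.l_m, ht.l_mb, ht.n_m,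
      ht.n_mb, ht.mb_m hB, ht.n_l hB, ht.m_l hB, ht.mb_l hB, ht.m_n hB, ht.mb_n hB] <;> ring

lemma sprodL_injective (hB : (gW g).IsSymm) (ht : IsNullTetrad (gW g) l n m mb)
    (h4 : finrank ℂ (Cx V) = 4) : Function.Injective (sprodL g l) := by
  refine (injective_iff_map_eq_zero _).2 fun b hb => ?_
  have hval : ∀ x, gW g b x = gW g b n * gW g l x := fun x => by
    have h := LinearMap.congr_fun₂ hb n x
    simp only [sprodL_apply, sprod_apply, ht.l_n, LinearMap.zero_apply] at h
    linear_combination -2 * h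
  have hbn : gW g b n = 0 := by
    have h := hval n
    rw [ht.l_n] at h
    linear_combination h / 2
  exact (ht.nondegenerate hB h4).1 b fun x => by rw [hval, hbn, zero_mul]

lemma setOf_isSymm_Dval_eq_zero (hB : (gW g).IsSymm) (ht : IsNullTetrad (gW g) (ι k) n m mb)
    (h4 : finrank ℂ (Cx V) = 4) :
    {S : LinearMap.BilinForm ℂ (Cx V) | S.IsSymm ∧ ∀ u v, Dval g k S u v = 0} =
      ↑(LinearMap.range (sprodL g (ι k)) ⊔
        Submodule.span ℂ ({sprod g m m, sprod g mb mb} : Set (LinearMap.BilinForm ℂ (Cx V)))) := by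
  ext S
  simp only [Set.mem_ofPred_eq, Dval_eq_zero_iff ht, SetLike.mem_coe, Submodule.mem_sup,
    LinearMap.mem_range, Submodule.mem_span_pair]
  constructor
  · rintro ⟨hS, hkS⟩
    have hmmb : S m mb = 0 := by
      have htr := trg_eq hB ht h4 S
      rw [hkS n, hS.eq n, hkS n, hS.eq mb, ht.l_n] at htr
      linear_combination -htr / 2
    refine ⟨_, ⟨_, rfl⟩, _, ⟨_, _, rfl⟩, (eq_sprod_add_sprod hB ht h4 hS ?_ ?_ ?_ hmmb).symm⟩ <;>
      simp [hkS, ht.l_l, ht.l_m, ht.l_mb]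
  · rintro ⟨_, ⟨b, rfl⟩, _, ⟨α, β, rfl⟩, rfl⟩
    refine ⟨isSymm_sprod_add _ _ _ _ _ _, fun v => ?_⟩
    rw [trg_eq hB ht h4]
    simp only [sprodL_apply, LinearMap.add_apply, LinearMap.smul_apply, smul_eq_mul, sprod_apply,
      ht.l_l, ht.l_n, ht.l_m, ht.l_mb, ht.m_m, ht.m_mb, ht.mb_mb, ht.mb_m hB, ht.m_l hB, ht.mb_l hB]
    ring

end

variable {V : Type} [AddCommGroup V] [Module ℝ V] [FiniteDimensional ℝ V]

theorem statement_1_general (g : LinearMap.BilinForm ℝ V) (hdim : finrank ℝ V = 4)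
    (hsymm : g.IsSymm)
    (k n : V) (m : Cx V)
    (htetrad : IsNPTetrad g k n m) :
    (LinearMap.range (sprodL g (ι k)) : Set (LinearMap.BilinForm ℂ (Cx V)))
        = {S | ∃ b : Cx V, S = sprod g (ι k) b} ∧
      {S : LinearMap.BilinForm ℂ (Cx V) | S.IsSymm ∧ ∀ u v, Dval g k S u v = 0}
        = ↑(LinearMap.range (sprodL g (ι k)) ⊔
            Submodule.span ℂ ({sprod g m m, sprod g (conjW m) (conjW m)} :
              Set (LinearMap.BilinForm ℂ (Cx V)))) ∧
      LinearMap.range (sprodL g (ι k)) ⊓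
          Submodule.span ℂ ({sprod g m m, sprod g (conjW m) (conjW m)} :
            Set (LinearMap.BilinForm ℂ (Cx V))) = ⊥ ∧
      finrank ℂ ↥(LinearMap.range (sprodL g (ι k))) = 4 ∧
      finrank ℂ ↥(Submodule.span ℂ ({sprod g m m, sprod g (conjW m) (conjW m)} :
          Set (LinearMap.BilinForm ℂ (Cx V)))) = 2 := by
  have hB := gW_isSymm hsymm
  have ht := htetrad.isNullTetrad
  have h4 : finrank ℂ (Cx V) = 4 := by rw [finrank_baseChange, hdim]
  refine ⟨Set.ext fun S => exists_congr fun b => eq_comm, setOf_isSymm_Dval_eq_zero hB ht h4,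
    range_sprodL_inf_span_eq_bot hB ht, ?_, ?_⟩
  · rw [LinearMap.finrank_range_of_inj (sprodL_injective hB ht h4), h4]
  · rw [← Matrix.range_cons_cons_empty, finrank_span_eq_card (linearIndependent_sprod_pair hB ht)]
    rfl

/-- The kernel of `D[k]` on complex symmetric bilinear forms is the internal direct
sum of `G = {k ⊙ b : b ∈ W}` (of complex dimension 4) and the 2-dimensional span
of `m⊙m` and `m̄⊙m̄`. -/
theorem statement_1 (g : LinearMap.BilinForm ℝ V) (hdim : finrank ℝ V = 4)
    (hg : g.Nondegenerate) (hsymm : g.IsSymm)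
    (k n : V) (m : Cx V) (hk : k ≠ 0) (hknull : g k k = 0)
    (htetrad : IsNPTetrad g k n m) :
    (LinearMap.range (sprodL g (ι k)) : Set (LinearMap.BilinForm ℂ (Cx V)))
        = {S | ∃ b : Cx V, S = sprod g (ι k) b} ∧
      {S : LinearMap.BilinForm ℂ (Cx V) | S.IsSymm ∧ ∀ u v, Dval g k S u v = 0}
        = ↑(LinearMap.range (sprodL g (ι k)) ⊔
            Submodule.span ℂ ({sprod g m m, sprod g (conjW m) (conjW m)} :
              Set (LinearMap.BilinForm ℂ (Cx V)))) ∧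
      LinearMap.range (sprodL g (ι k)) ⊓
          Submodule.span ℂ ({sprod g m m, sprod g (conjW m) (conjW m)} :
            Set (LinearMap.BilinForm ℂ (Cx V))) = ⊥ ∧
      finrank ℂ ↥(LinearMap.range (sprodL g (ι k))) = 4 ∧
      finrank ℂ ↥(Submodule.span ℂ ({sprod g m m, sprod g (conjW m) (conjW m)} :
          Set (LinearMap.BilinForm ℂ (Cx V)))) = 2 :=
  statement_1_general g hdim hsymm k n m htetrad
end

section
/- Let k ∈ V be a nonzero null vector and (n, m, m̄) a Newman–Penrose tetrad adapted to k. For z₁, z₂, z₄, z₅, z₆ ∈ ℂ, let a = z₁ m⊙m + z₂ m̄⊙m̄ + z₄ k⊙k + z₅ k⊙m + z₆ k⊙m̄ (i.e. a traceless transverse polarization tensor, z₃ = 0), and let ā denote its complex conjugate form, ā(u,v) = conj(a(ū, v̄)). Then the full metric contraction satisfies ⟨ā, a⟩ = |z₁|² + |z₂|². -/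
/-! Since `hatEnd (u ⊙ v) = ½ (g(u,·) v + g(v,·) u)` has rank at most two, the contraction of two
symmetric products is `⟨u ⊙ v, x ⊙ y⟩ = ½ (g(u,x) g(v,y) + g(u,y) g(v,x))`. Conjugation swaps
`m` and `m̄` and fixes `k`, so `⟨ā, a⟩` expands into such contractions of tetrad vectors. The only
nonzero pairing among `k, m, m̄` is `g(m, m̄) = 1`, so only the `z̄₁ z₁` and `z̄₂ z₂` terms survive. -/

open scoped TensorProduct
open Module

noncomputable section

variable {V : Type} [AddCommGroup V] [Module ℝ V]

variable [FiniteDimensional ℝ V]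

section Polarization

-- A fresh `V`, so that the ambient `[FiniteDimensional ℝ V]` is only assumed where needed.
variable {V : Type} [AddCommGroup V] [Module ℝ V]

lemma conjW_conjW (u : Cx V) : conjW (conjW u) = u := by
  induction u using TensorProduct.induction_on with
  | zero => simp
  | tmul x v => simp [conjW]
  | add a b ha hb => simp [map_add, ha, hb]

lemma conjW_ι (k : V) : conjW (ι k) = ι k := by
  simp [conjW, ι]

lemma conj_gW (g : LinearMap.BilinForm ℝ V) (u v : Cx V) :
    starRingEnd ℂ (gW g u v) = gW g (conjW u) (conjW v) := by
  induction u using TensorProduct.induction_on with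
  | zero => simp
  | tmul x a =>
      induction v using TensorProduct.induction_on with
      | zero => simp
      | tmul y b => simp [conjW, gW, LinearMap.BilinForm.baseChange_tmul, map_mul]
      | add p q hp hq => simp only [map_add, hp, hq]
  | add p q hp hq => simp only [map_add, LinearMap.add_apply, hp, hq]

lemma conjForm_add (a b : LinearMap.BilinForm ℂ (Cx V)) :
    conjForm (a + b) = conjForm a + conjForm b := by
  ext u v
  simp [conjForm]

lemma conjForm_smul (c : ℂ) (a : LinearMap.BilinForm ℂ (Cx V)) :
    conjForm (c • a) = starRingEnd ℂ c • conjForm a := by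
  ext u v
  simp [conjForm]

lemma conjForm_sprod (g : LinearMap.BilinForm ℝ V) (u v : Cx V) :
    conjForm (sprod g u v) = sprod g (conjW u) (conjW v) := by
  refine LinearMap.ext fun a => LinearMap.ext fun b => ?_
  simp [conjForm, sprod, conj_gW, conjW_conjW, map_ofNat]

lemma gW_comm {g : LinearMap.BilinForm ℝ V} (hsymm : g.IsSymm) (u v : Cx V) :
    gW g u v = gW g v u :=
  (LinearMap.BilinForm.IsSymm.baseChange ℂ (LinearMap.BilinForm.isSymm_iff.mp hsymm)).eq u v

lemma gW_nondegenerate [FiniteDimensional ℝ V] {g : LinearMap.BilinForm ℝ V}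
    (hg : g.Nondegenerate) : (gW g).Nondegenerate := by
  let b := finBasis ℝ V
  apply LinearMap.BilinForm.nondegenerate_of_det_ne_zero (B₃ := gW g) (b.baseChange ℂ)
  have hmat : LinearMap.BilinForm.toMatrix (b.baseChange ℂ) (gW g)
      = (LinearMap.BilinForm.toMatrix b g).map (algebraMap ℝ ℂ) := by
    ext i j
    simp [LinearMap.BilinForm.toMatrix_apply, Basis.baseChange_apply, gW,
      LinearMap.BilinForm.baseChange_tmul]
  rw [hmat, ← RingHom.mapMatrix_apply, ← RingHom.map_det]
  simpa using (LinearMap.BilinForm.nondegenerate_iff_det_ne_zero b).mp hg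

variable [FiniteDimensional ℝ V]

lemma hatEnd_eq_of_forall {g : LinearMap.BilinForm ℝ V} (hnd : (gW g).Nondegenerate)
    {S : LinearMap.BilinForm ℂ (Cx V)} {T : Cx V →ₗ[ℂ] Cx V}
    (h : ∀ a b, gW g (T a) b = S a b) : hatEnd g S = T := by
  rw [hatEnd, dif_pos hnd]
  refine LinearMap.ext fun a => ((gW g).toDual hnd).injective ?_
  rw [LinearMap.comp_apply, LinearEquiv.coe_toLinearMap, LinearEquiv.apply_symm_apply]
  exact LinearMap.ext fun b => (h a b).symm

lemma hatEnd_add (g : LinearMap.BilinForm ℝ V) (S T : LinearMap.BilinForm ℂ (Cx V)) :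
    hatEnd g (S + T) = hatEnd g S + hatEnd g T := by
  unfold hatEnd
  split_ifs
  · exact LinearMap.comp_add _ _ _
  · simp

lemma hatEnd_smul (g : LinearMap.BilinForm ℝ V) (c : ℂ) (S : LinearMap.BilinForm ℂ (Cx V)) :
    hatEnd g (c • S) = c • hatEnd g S := by
  unfold hatEnd
  split_ifs
  · exact LinearMap.comp_smul _ _ _
  · simp

lemma contr_add_left (g : LinearMap.BilinForm ℝ V) (A A' B : LinearMap.BilinForm ℂ (Cx V)) :
    contr g (A + A') B = contr g A B + contr g A' B := by
  simp [contr, hatEnd_add, LinearMap.add_comp]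

lemma contr_add_right (g : LinearMap.BilinForm ℝ V) (A B B' : LinearMap.BilinForm ℂ (Cx V)) :
    contr g A (B + B') = contr g A B + contr g A B' := by
  simp [contr, hatEnd_add, LinearMap.comp_add]

lemma contr_smul_left (g : LinearMap.BilinForm ℝ V) (c : ℂ)
    (A B : LinearMap.BilinForm ℂ (Cx V)) : contr g (c • A) B = c * contr g A B := by
  simp [contr, hatEnd_smul, LinearMap.smul_comp]

lemma contr_smul_right (g : LinearMap.BilinForm ℝ V) (c : ℂ)
    (A B : LinearMap.BilinForm ℂ (Cx V)) : contr g A (c • B) = c * contr g A B := by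
  simp [contr, hatEnd_smul, LinearMap.comp_smul]

lemma hatEnd_sprod {g : LinearMap.BilinForm ℝ V} (hg : g.Nondegenerate) (u v : Cx V) :
    hatEnd g (sprod g u v) = (1 / 2 : ℂ) • ((gW g u).smulRight v + (gW g v).smulRight u) :=
  hatEnd_eq_of_forall (gW_nondegenerate hg) fun a b => by
    simp only [LinearMap.smul_apply, LinearMap.add_apply, LinearMap.smulRight_apply,
      map_add, map_smul, smul_eq_mul, sprod, LinearMap.mk₂_apply]

lemma contr_sprod {g : LinearMap.BilinForm ℝ V} (hg : g.Nondegenerate) (hsymm : g.IsSymm)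
    (u v x y : Cx V) :
    contr g (sprod g u v) (sprod g x y)
      = (1 / 2 : ℂ) * (gW g u x * gW g v y + gW g u y * gW g v x) := by
  rw [contr, hatEnd_sprod hg, hatEnd_sprod hg]
  have hcomp : ∀ (f h : Cx V →ₗ[ℂ] ℂ) (a b : Cx V),
      f.smulRight a ∘ₗ h.smulRight b = f b • h.smulRight a := fun f h a b => by
    ext; simp [smul_smul, mul_comm]
  simp only [LinearMap.smul_comp, LinearMap.comp_smul, LinearMap.add_comp,
    LinearMap.comp_add, hcomp, map_add, map_smul, LinearMap.trace_smulRight, smul_eq_mul]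
  rw [gW_comm hsymm x u, gW_comm hsymm x v, gW_comm hsymm y u, gW_comm hsymm y v]
  ring

end Polarization

theorem statement_12_general (g : LinearMap.BilinForm ℝ V) (hg : g.Nondegenerate) (hsymm : g.IsSymm)
    (k n : V) (m : Cx V)
    (htetrad : IsNPTetrad g k n m)
    (z₁ z₂ z₄ z₅ z₆ : ℂ) :
    contr g
        (conjForm (z₁ • sprod g m m + z₂ • sprod g (conjW m) (conjW m)
          + z₄ • sprod g (ι k) (ι k) + z₅ • sprod g (ι k) m
          + z₆ • sprod g (ι k) (conjW m)))
        (z₁ • sprod g m m + z₂ • sprod g (conjW m) (conjW m)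
          + z₄ • sprod g (ι k) (ι k) + z₅ • sprod g (ι k) m
          + z₆ • sprod g (ι k) (conjW m))
      = ((‖z₁‖ ^ 2 + ‖z₂‖ ^ 2 : ℝ) : ℂ) := by
  obtain ⟨hmm', -, hkk, -, hmm, hm'm', hkm, hkm', -, -⟩ := htetrad
  have hm'm : gW g (conjW m) m = 1 := by rw [gW_comm hsymm]; exact hmm'
  have hmk : gW g m (ι k) = 0 := by rw [gW_comm hsymm]; exact hkm
  have hm'k : gW g (conjW m) (ι k) = 0 := by rw [gW_comm hsymm]; exact hkm'
  simp only [conjForm_add, conjForm_smul, conjForm_sprod, conjW_conjW, conjW_ι,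
    contr_add_left, contr_add_right, contr_smul_left, contr_smul_right, contr_sprod hg hsymm,
    hmm', hm'm, hkk, hmm, hm'm', hkm, hkm', hmk, hm'k]
  rw [Complex.ofReal_add, Complex.sq_norm, Complex.sq_norm, ← Complex.mul_conj,
    ← Complex.mul_conj]
  ring

/-- For a traceless transverse polarization tensor
`a = z₁ m⊙m + z₂ m̄⊙m̄ + z₄ k⊙k + z₅ k⊙m + z₆ k⊙m̄`, the full metric contraction
with its conjugate satisfies `⟨ā, a⟩ = |z₁|² + |z₂|²`. -/
theorem statement_12 (g : LinearMap.BilinForm ℝ V) (hdim : finrank ℝ V = 4)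
    (hg : g.Nondegenerate) (hsymm : g.IsSymm)
    (k n : V) (m : Cx V) (hk : k ≠ 0) (hknull : g k k = 0)
    (htetrad : IsNPTetrad g k n m)
    (z₁ z₂ z₄ z₅ z₆ : ℂ) :
    contr g
        (conjForm (z₁ • sprod g m m + z₂ • sprod g (conjW m) (conjW m)
          + z₄ • sprod g (ι k) (ι k) + z₅ • sprod g (ι k) m
          + z₆ • sprod g (ι k) (conjW m)))
        (z₁ • sprod g m m + z₂ • sprod g (conjW m) (conjW m)
          + z₄ • sprod g (ι k) (ι k) + z₅ • sprod g (ι k) m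
          + z₆ • sprod g (ι k) (conjW m))
      = ((‖z₁‖ ^ 2 + ‖z₂‖ ^ 2 : ℝ) : ℂ) :=
  statement_12_general g hg hsymm k n m htetrad z₁ z₂ z₄ z₅ z₆

end
end
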